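/- For every real a > 0, the smallest Rayleigh value of the Hessian of ℓ at the scaled point (a⁻¹ W1, a W2) satisfies λ_min(a⁻¹ W1, a W2) ≤ 2 a⁻² σ_min(W1)². -/

import Mathlib

open Matrix

/-- Squared Frobenius norm. -/
def froSq {d : ℕ} (A : Matrix (Fin d) (Fin d) ℝ) : ℝ :=
  ∑ i, ∑ j, (A i j) ^ 2

/-- The matrix-factorization loss ℓ(A, B) = ‖A B − M‖_F². -/
def loss {d : ℕ} (M A B : Matrix (Fin d) (Fin d) ℝ) : ℝ :=
  froSq (A * B - M)

/-- The Hessian quadratic form of ℓ at `(A, B)` in direction `(E1, E2)`: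
`Q_{(A,B)}(E1, E2) = (d²/dt²)|_{t=0} ℓ(A + t E1, B + t E2)`. -/
noncomputable def hessQ {d : ℕ} (M A B E1 E2 : Matrix (Fin d) (Fin d) ℝ) : ℝ :=
  iteratedDeriv 2 (fun t : ℝ => loss M (A + t • E1) (B + t • E2)) 0

/-- Smallest Rayleigh value of the Hessian of ℓ at `(A, B)`:
`λ_min(A, B) = inf { Q_{(A,B)}(E1, E2) : ‖E1‖_F² + ‖E2‖_F² = 1 }`. -/
noncomputable def lamMin {d : ℕ} (M A B : Matrix (Fin d) (Fin d) ℝ) : ℝ :=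
  sInf {q : ℝ | ∃ E1 E2 : Matrix (Fin d) (Fin d) ℝ,
    froSq E1 + froSq E2 = 1 ∧ q = hessQ M A B E1 E2}

/-- Euclidean (ℓ₂) norm of a vector in ℝ^d. -/
noncomputable def euclNorm {d : ℕ} (x : Fin d → ℝ) : ℝ :=
  Real.sqrt (∑ i, (x i) ^ 2)

/-- The smallest singular value of `W`: `min_{‖x‖₂ = 1} ‖W x‖₂`. -/
noncomputable def sigmaMin {d : ℕ} (W : Matrix (Fin d) (Fin d) ℝ) : ℝ :=
  sInf {y : ℝ | ∃ x : Fin d → ℝ, euclNorm x = 1 ∧ y = euclNorm (W.mulVec x)}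

/-!
Perturb only the second factor, `(E₁, E₂) = (0, x e_jᵀ)` with `‖x‖₂ = 1`. Along this line the loss
is a quadratic in `t` with leading coefficient `‖A x e_jᵀ‖_F² = ‖A x‖₂²`, so the Hessian value is
`2 ‖a⁻¹ W₁ x‖₂² = 2 a⁻² ‖W₁ x‖₂²`; taking the infimum over unit `x` gives `2 a⁻² σ_min(W₁)²`.
-/

lemma iteratedDeriv_two_quadratic (c₀ c₁ c₂ x : ℝ) :
    iteratedDeriv 2 (fun t : ℝ => c₀ + c₁ * t + c₂ * t ^ 2) x = 2 * c₂ := by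
  have h1 : deriv (fun t : ℝ => c₀ + c₁ * t + c₂ * t ^ 2) = fun t => c₁ + c₂ * (2 * t) := by
    ext t
    exact (((hasDerivAt_id t).const_mul c₁).const_add c₀ |>.add
      ((hasDerivAt_pow 2 t).const_mul c₂)).deriv.trans (by simp)
  have h2 : deriv (fun t : ℝ => c₁ + c₂ * (2 * t)) x = 2 * c₂ :=
    ((((hasDerivAt_id x).const_mul 2).const_mul c₂).const_add c₁).deriv.trans (by simp; ring)
  rw [iteratedDeriv_succ, iteratedDeriv_one, h1, h2]

lemma froSq_add_smul {d : ℕ} (C D : Matrix (Fin d) (Fin d) ℝ) (t : ℝ) :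
    froSq (C + t • D) = froSq C + (∑ i, ∑ j, 2 * C i j * D i j) * t + froSq D * t ^ 2 := by
  simp only [froSq, Matrix.add_apply, Matrix.smul_apply, smul_eq_mul, Finset.sum_mul,
    ← Finset.sum_add_distrib]
  exact Finset.sum_congr rfl fun i _ => Finset.sum_congr rfl fun j _ => by ring

lemma iteratedDeriv_two_froSq_add_smul {d : ℕ} (C D : Matrix (Fin d) (Fin d) ℝ) (x : ℝ) :
    iteratedDeriv 2 (fun t : ℝ => froSq (C + t • D)) x = 2 * froSq D := by
  simp only [froSq_add_smul, iteratedDeriv_two_quadratic]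

lemma hessQ_zero_left {d : ℕ} (M A B E : Matrix (Fin d) (Fin d) ℝ) :
    hessQ M A B 0 E = 2 * froSq (A * E) := by
  have h : ∀ t : ℝ, loss M (A + t • 0) (B + t • E) = froSq ((A * B - M) + t • (A * E)) := by
    intro t
    rw [loss, smul_zero, add_zero, Matrix.mul_add, Matrix.mul_smul, sub_add_eq_add_sub]
  simp only [hessQ, h, iteratedDeriv_two_froSq_add_smul]

/-- Nonnegativity of the value covers the case where `sInf` of an unbounded set is the junk `0`. -/
lemma lamMin_le_of_nonneg {d : ℕ} {M A B E₁ E₂ : Matrix (Fin d) (Fin d) ℝ}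
    (hE : froSq E₁ + froSq E₂ = 1) (hQ : 0 ≤ hessQ M A B E₁ E₂) :
    lamMin M A B ≤ hessQ M A B E₁ E₂ := by
  by_cases hbdd : BddBelow {q : ℝ | ∃ E₁ E₂ : Matrix (Fin d) (Fin d) ℝ,
      froSq E₁ + froSq E₂ = 1 ∧ q = hessQ M A B E₁ E₂}
  · exact csInf_le hbdd ⟨E₁, E₂, hE, rfl⟩
  · rwa [lamMin, Real.sInf_of_not_bddBelow hbdd]

lemma euclNorm_sq {d : ℕ} (x : Fin d → ℝ) : euclNorm x ^ 2 = ∑ i, x i ^ 2 :=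
  Real.sq_sqrt (Finset.sum_nonneg fun i _ => sq_nonneg (x i))

lemma euclNorm_smul_sq {d : ℕ} (c : ℝ) (x : Fin d → ℝ) :
    euclNorm (c • x) ^ 2 = c ^ 2 * euclNorm x ^ 2 := by
  simp only [euclNorm_sq, Pi.smul_apply, smul_eq_mul, mul_pow, Finset.mul_sum]

lemma euclNorm_single_one {d : ℕ} (j : Fin d) : euclNorm (Pi.single j (1 : ℝ)) = 1 := by
  rw [euclNorm, Finset.sum_eq_single j (fun i _ hi => by simp [hi]) (by simp)]
  simp

lemma froSq_vecMulVec {d : ℕ} (x y : Fin d → ℝ) :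
    froSq (vecMulVec x y) = euclNorm x ^ 2 * euclNorm y ^ 2 := by
  simp only [froSq, euclNorm_sq, vecMulVec_apply, mul_pow, Finset.sum_mul_sum]

lemma lamMin_le_two_mul_euclNorm_mulVec_sq {d : ℕ} [Nonempty (Fin d)]
    (M A B : Matrix (Fin d) (Fin d) ℝ) {x : Fin d → ℝ} (hx : euclNorm x = 1) :
    lamMin M A B ≤ 2 * euclNorm (A *ᵥ x) ^ 2 := by
  obtain ⟨j⟩ := ‹Nonempty (Fin d)›
  set E := vecMulVec x (Pi.single j 1)
  have hE : froSq (0 : Matrix (Fin d) (Fin d) ℝ) + froSq E = 1 := by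
    rw [froSq_vecMulVec, hx, euclNorm_single_one]
    simp [froSq]
  have hQ : hessQ M A B 0 E = 2 * euclNorm (A *ᵥ x) ^ 2 := by
    rw [hessQ_zero_left, mul_vecMulVec, froSq_vecMulVec, euclNorm_single_one, one_pow, mul_one]
  exact hQ ▸ lamMin_le_of_nonneg hE (hQ ▸ by positivity)

lemma le_sInf_sq_of_forall_le_sq {S : Set ℝ} {b : ℝ} (hS : S.Nonempty)
    (hnn : ∀ y ∈ S, 0 ≤ y) (hb : ∀ y ∈ S, b ≤ y ^ 2) : b ≤ sInf S ^ 2 := by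
  rcases le_or_gt b 0 with hb0 | hb0
  · exact hb0.trans (sq_nonneg _)
  have hsqrt : √b ≤ sInf S := le_csInf hS fun y hy =>
    (Real.sqrt_le_sqrt (hb y hy)).trans_eq (Real.sqrt_sq (hnn y hy))
  calc b = √b ^ 2 := (Real.sq_sqrt hb0.le).symm
    _ ≤ sInf S ^ 2 := pow_le_pow_left₀ (Real.sqrt_nonneg b) hsqrt 2

lemma le_sigmaMin_sq_of_forall {d : ℕ} [Nonempty (Fin d)] {W : Matrix (Fin d) (Fin d) ℝ} {b : ℝ}
    (hb : ∀ x, euclNorm x = 1 → b ≤ euclNorm (W *ᵥ x) ^ 2) : b ≤ sigmaMin W ^ 2 := by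
  obtain ⟨j⟩ := ‹Nonempty (Fin d)›
  refine le_sInf_sq_of_forall_le_sq ⟨_, Pi.single j 1, euclNorm_single_one j, rfl⟩ ?_ ?_
  · rintro y ⟨x, -, rfl⟩
    exact Real.sqrt_nonneg _
  · rintro y ⟨x, hx, rfl⟩
    exact hb x hx

/-- For every `a > 0`, `λ_min(a⁻¹ W1, a W2) ≤ 2 a⁻² σ_min(W1)²`. -/
theorem lamMin_scaled_upper_bound (d : ℕ) (hd : 0 < d)
    (M W1 W2 : Matrix (Fin d) (Fin d) ℝ) (a : ℝ) (ha : 0 < a) :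
    lamMin M (a⁻¹ • W1) (a • W2) ≤ 2 * (a ^ 2)⁻¹ * sigmaMin W1 ^ 2 := by
  have : Nonempty (Fin d) := ⟨⟨0, hd⟩⟩
  have hc : 0 < 2 * (a ^ 2)⁻¹ := by positivity
  rw [← div_le_iff₀' hc]
  refine le_sigmaMin_sq_of_forall fun x hx => ?_
  rw [div_le_iff₀' hc, ← inv_pow, mul_assoc, ← euclNorm_smul_sq, ← smul_mulVec]
  exact lamMin_le_two_mul_euclNorm_mulVec_sq M _ _ hx
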